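/- arXiv:1709.03825 — 3 statements merged into one kernel-verified Lean document; each statement's English description precedes it below -/
import Mathlib

section
/- Let (T,M) be a complete Noetherian local ring, C a countable set of prime ideals of T with M ∉ C, and D a countable subset of T. If I is an ideal of T not contained in any single member of C, then I is not contained in the union of the cosets r + P over all P ∈ C and r ∈ D. -/
/-!
Enumerate the pairs `(P, r)` as `(Pₙ, rₙ)` and build an `M`-adically convergent sequence
`xₙ ∈ I`. At step `n`, adding an element of `I * M ^ c \ Pₙ` if necessary moves `xₙ` out of
`rₙ + Pₙ` by an element of `M ^ c`. Since ideals of a Noetherian local ring are `M`-adically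
closed (Krull), the new term even lies outside `rₙ + Pₙ + M ^ k` for some `k`, and requiring
all later steps to lie in `M ^ k` keeps the limit outside `rₙ + Pₙ`. The limit lies in `I`
because `I` is closed.
-/

open IsLocalRing

variable {R : Type*} [CommRing R]

theorem Ideal.IsPrime.exists_mem_sub_mem_and_sub_notMem {P I K : Ideal R} (hP : P.IsPrime)
    (hIP : ¬ I ≤ P) (hKP : ¬ K ≤ P) {x : R} (hx : x ∈ I) (r : R) :
    ∃ y ∈ I, y - x ∈ K ∧ y - r ∉ P := by
  by_cases hxr : x - r ∈ P
  · obtain ⟨t, ht, htP⟩ := Set.not_subset.mp (mt hP.mul_le.mp (not_or.mpr ⟨hIP, hKP⟩))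
    obtain ⟨htI, htK⟩ := Ideal.mul_le_inf ht
    refine ⟨x + t, I.add_mem hx htI, by rwa [add_sub_cancel_left], fun h => htP ?_⟩
    simpa using P.sub_mem h hxr
  · exact ⟨x, hx, by simp, hxr⟩

theorem Ideal.mem_of_forall_mem_sup_maximalIdeal_pow [IsNoetherianRing R] [IsLocalRing R]
    {J : Ideal R} {x : R} (h : ∀ n, x ∈ J ⊔ maximalIdeal R ^ n) : x ∈ J := by
  rw [← Ideal.Quotient.eq_zero_iff_mem]
  refine IsHausdorff.haus (I := maximalIdeal R) inferInstance _ fun n => ?_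
  obtain ⟨a, ha, b, hb, rfl⟩ := Submodule.mem_sup.mp (h n)
  rw [SModEq.zero, map_add, Ideal.Quotient.eq_zero_iff_mem.mpr ha, zero_add,
    ← Ideal.Quotient.algebraMap_eq, Algebra.algebraMap_eq_smul_one]
  exact Submodule.smul_mem_smul hb Submodule.mem_top

theorem IsLocalRing.not_maximalIdeal_pow_le [IsLocalRing R] {P : Ideal R} (hP : P.IsPrime)
    (hPM : P ≠ maximalIdeal R) (n : ℕ) : ¬ maximalIdeal R ^ n ≤ P := fun h =>
  hPM ((maximalIdeal.isMaximal R).eq_of_le hP.ne_top (hP.le_of_pow_le h)).symm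

theorem IsPrecomplete.exists_sub_mem_pow {J : Ideal R} [IsPrecomplete J R] {x : ℕ → R}
    {c : ℕ → ℕ} (hc : StrictMono c) (hx : ∀ n, x (n + 1) - x n ∈ J ^ c n) :
    ∃ L, ∀ n, L - x n ∈ J ^ c n := by
  have hcauchy : ∀ n m, n ≤ m → x m - x n ∈ J ^ c n := fun n m hnm => by
    induction m, hnm using Nat.le_induction with
    | base => simp
    | succ m hnm ih =>
      rw [← sub_add_sub_cancel]
      exact add_mem (Ideal.pow_le_pow_right (hc.monotone hnm) (hx m)) ih
  have hsmul : ∀ n, (J ^ n • ⊤ : Ideal R) = J ^ n := fun n => by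
    rw [smul_eq_mul, Ideal.mul_top]
  obtain ⟨L, hL⟩ := IsPrecomplete.prec ‹_› (f := x) fun {m n} hmn => by
    rw [SModEq.sub_mem, hsmul, ← neg_sub]
    exact neg_mem (Ideal.pow_le_pow_right (hc.id_le m) (hcauchy m n hmn))
  refine ⟨L, fun n => ?_⟩
  have hLc : x (c n) - L ∈ J ^ c n := by simpa only [SModEq.sub_mem, hsmul] using hL (c n)
  rw [← sub_sub_sub_cancel_left (x n) L (x (c n))]
  exact sub_mem (hcauchy n (c n) (hc.id_le n)) hLc

theorem Ideal.exists_mem_forall_sub_notMem_of_seq [IsNoetherianRing R] [IsLocalRing R]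
    [IsAdicComplete (maximalIdeal R) R] (I : Ideal R) (P : ℕ → Ideal R)
    (hP : ∀ n, (P n).IsPrime) (hPM : ∀ n, P n ≠ maximalIdeal R) (hIP : ∀ n, ¬ I ≤ P n)
    (r : ℕ → R) : ∃ L ∈ I, ∀ n, L - r n ∉ P n := by
  have step : ∀ n (x : I) (c : ℕ), ∃ (y : I) (k : ℕ), c < k ∧
      (y : R) - x ∈ maximalIdeal R ^ c ∧ (y : R) - r n ∉ P n ⊔ maximalIdeal R ^ k := by
    intro n x c
    obtain ⟨y, hyI, hyx, hyr⟩ := (hP n).exists_mem_sub_mem_and_sub_notMem (hIP n)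
      (not_maximalIdeal_pow_le (hP n) (hPM n) c) x.2 (r n)
    obtain ⟨k, hk⟩ : ∃ k, y - r n ∉ P n ⊔ maximalIdeal R ^ k := by
      by_contra! h
      exact hyr (mem_of_forall_mem_sup_maximalIdeal_pow h)
    have hpow := Ideal.pow_le_pow_right (I := maximalIdeal R) (le_max_left k (c + 1))
    exact ⟨⟨y, hyI⟩, max k (c + 1), by omega, hyx,
      fun h => hk (sup_le_sup_left hpow (P n) h)⟩
  choose y k hck hyx hyr using step
  -- `s n = (xₙ, cₙ)`: the `n`-th term and the precision that all later terms must respect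
  let s : ℕ → I × ℕ := fun n => Nat.rec (0, 0) (fun n p => (y n p.1 p.2, k n p.1 p.2)) n
  have hc : StrictMono fun n => (s n).2 := strictMono_nat_of_lt_succ fun n => hck n _ _
  obtain ⟨L, hL⟩ := IsPrecomplete.exists_sub_mem_pow (x := fun n => ((s n).1 : R)) hc
    fun n => hyx n (s n).1 (s n).2
  refine ⟨L, mem_of_forall_mem_sup_maximalIdeal_pow fun n => ?_,
    fun n hLr => hyr n (s n).1 (s n).2 ?_⟩
  · rw [← add_sub_cancel ((s n).1 : R) L]
    exact add_mem (mem_sup_left (s n).1.2)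
      (mem_sup_right (Ideal.pow_le_pow_right (hc.id_le n) (hL n)))
  · rw [← sub_sub_sub_cancel_left _ _ L]
    exact sub_mem (mem_sup_left hLr) (mem_sup_right (hL (n + 1)))

theorem Ideal.exists_mem_forall_sub_notMem [IsNoetherianRing R] [IsLocalRing R]
    [IsAdicComplete (maximalIdeal R) R] {ι : Type*} [Countable ι] (I : Ideal R)
    (P : ι → Ideal R) (hP : ∀ i, (P i).IsPrime) (hPM : ∀ i, P i ≠ maximalIdeal R)
    (hIP : ∀ i, ¬ I ≤ P i) (r : ι → R) : ∃ L ∈ I, ∀ i, L - r i ∉ P i := by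
  rcases isEmpty_or_nonempty ι with _ | _
  · exact ⟨0, I.zero_mem, isEmptyElim⟩
  obtain ⟨f, hf⟩ := exists_surjective_nat ι
  obtain ⟨L, hLI, hL⟩ := exists_mem_forall_sub_notMem_of_seq I (P ∘ f) (fun n => hP (f n))
    (fun n => hPM (f n)) (fun n => hIP (f n)) (r ∘ f)
  exact ⟨L, hLI, hf.forall.mpr hL⟩

/-- Heitmann's generalized countable prime avoidance: let `(T,M)` be a complete Noetherian
local ring, `C` a countable set of primes of `T` not containing `M`, and `D` a countable
subset of `T`.  If `I` is an ideal of `T` contained in no single member of `C`, then `I`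
is not contained in the union of the cosets `r + P` for `P ∈ C`, `r ∈ D`. -/
theorem stmt11 (T : Type) [CommRing T] [IsLocalRing T] [IsNoetherianRing T]
    [IsAdicComplete (maximalIdeal T) T]
    (C : Set (PrimeSpectrum T)) (hC : C.Countable)
    (hM : ∀ P ∈ C, P.asIdeal ≠ maximalIdeal T)
    (D : Set T) (hD : D.Countable)
    (I : Ideal T) (hI : ∀ P ∈ C, ¬ I ≤ P.asIdeal) :
    ¬ (I : Set T) ⊆ ⋃ (P ∈ C) (r ∈ D), {x : T | x - r ∈ P.asIdeal} := by
  intro hsub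
  have := (hC.prod hD).to_subtype
  obtain ⟨L, hLI, hL⟩ := Ideal.exists_mem_forall_sub_notMem I
    (fun i : ↥(C ×ˢ D) => i.1.1.asIdeal) (fun i => i.1.1.isPrime) (fun i => hM _ i.2.1)
    (fun i => hI _ i.2.1) (fun i => i.1.2)
  obtain ⟨P, hP, r, hr, hLr⟩ : ∃ P ∈ C, ∃ r ∈ D, L - r ∈ P.asIdeal := by
    simpa using hsub hLI
  exact hL ⟨(P, r), hP, hr⟩ hLr
end

section
/- Every Noetherian local unique factorization domain of dimension at most 3 is catenary. -/
/-!
If saturated chains of lengths `n < m ≤ 3` joined the same primes, then `n = 2`, `m = 3`, and the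
dimension bound forces the longer chain to start at `0`; so the chains read `0 ⋖ P ⋖ Q` and
`0 ⋖ P' ⋖ R ⋖ Q`. Height-one primes of a UFD are principal, `P = (π)`, and `Q` is then minimal
over `P' + (π)`. Krull's principal ideal theorem in `A ⧸ P'` bounds the height of `Q ⧸ P'` by one,
contradicting `P' < R < Q`.
-/

open IsLocalRing

/-- A chain of primes indexed by `Fin (n+1)` is saturated if each step is a covering
relation in `Spec`. -/
def IsSaturatedChain {R : Type} [CommRing R] {n : ℕ} (f : Fin (n + 1) → PrimeSpectrum R) : Prop :=
  ∀ i : Fin n, f i.castSucc ⋖ f i.succ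

/-- A ring is catenary if any two saturated chains of primes with the same endpoints have
the same length. -/
def IsCatenary (R : Type) [CommRing R] : Prop :=
  ∀ (n m : ℕ) (f : Fin (n + 1) → PrimeSpectrum R) (g : Fin (m + 1) → PrimeSpectrum R),
    IsSaturatedChain f → IsSaturatedChain g → f 0 = g 0 →
    f (Fin.last n) = g (Fin.last m) → n = m

lemma Ideal.map_quotientMk_lt_map {A : Type} [CommRing A] {I J K : Ideal A} (hIJ : I ≤ J)
    (hJK : J < K) :
    J.map (Ideal.Quotient.mk I) < K.map (Ideal.Quotient.mk I) := by
  refine lt_of_le_not_ge (Ideal.map_mono hJK.le) fun h => hJK.not_ge ?_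
  simpa only [Ideal.comap_map_mk hIJ, Ideal.comap_map_mk (hIJ.trans hJK.le)] using
    Ideal.comap_mono (f := Ideal.Quotient.mk I) h

namespace PrimeSpectrum

variable {A : Type} [CommRing A]

lemma mem_minimalPrimes_sup_of_covBy {p p' q : PrimeSpectrum A} (hpq : p ⋖ q)
    (hp'q : p' ≤ q) (hp'p : ¬ p' ≤ p) : q.asIdeal ∈ (p'.asIdeal ⊔ p.asIdeal).minimalPrimes := by
  refine ⟨⟨q.isPrime, sup_le hp'q hpq.le⟩, fun T ⟨hT, hT_ge⟩ hTq => ?_⟩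
  let T' : PrimeSpectrum A := ⟨T, hT⟩
  have hp'T : p' ≤ T' := le_sup_left.trans hT_ge
  rcases hpq.eq_or_eq (c := T') (le_sup_right.trans hT_ge) hTq with hTp | hTq'
  · exact absurd (hTp ▸ hp'T) hp'p
  · exact (congrArg asIdeal hTq').ge

lemma covBy_of_mem_minimalPrimes_sup_span_singleton [IsNoetherianRing A]
    {p q : PrimeSpectrum A} {x : A} (hq : q.asIdeal ∈ (p.asIdeal ⊔ Ideal.span {x}).minimalPrimes)
    (hpq : p < q) : p ⋖ q := by
  refine ⟨hpq, fun r hpr hrq => ?_⟩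
  let mk := Ideal.Quotient.mk p.asIdeal
  have hr : (⊥ : Ideal (A ⧸ p.asIdeal)) < r.asIdeal.map mk := by
    simpa only [Ideal.map_quotient_self] using Ideal.map_quotientMk_lt_map le_rfl hpr
  have hq' : r.asIdeal.map mk < q.asIdeal.map mk := Ideal.map_quotientMk_lt_map hpr.le hrq
  have := Ideal.isPrime_map_quotientMk_of_isPrime hpr.le
  have := Ideal.isPrime_map_quotientMk_of_isPrime (hpr.trans hrq).le
  have h2 : (⊥ : Ideal (A ⧸ p.asIdeal)).height + 1 + 1 ≤ (q.asIdeal.map mk).height :=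
    (add_le_add_left (Ideal.height_add_one_le_of_lt_of_isPrime hr) 1).trans
      (Ideal.height_add_one_le_of_lt_of_isPrime hq')
  have h1 := Ideal.map_height_le_one_of_mem_minimalPrimes hq
  rw [Ideal.height_bot] at h2
  have := h2.trans h1
  norm_num at this

lemma exists_asIdeal_eq_span_singleton_of_bot_covBy [IsDomain A] [UniqueFactorizationMonoid A]
    {p : PrimeSpectrum A} (hp : ⊥ ⋖ p) : ∃ π : A, p.asIdeal = Ideal.span {π} := by
  obtain ⟨π, hπp, hπ⟩ := p.isPrime.exists_mem_prime_of_ne_bot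
    (fun h => hp.lt.ne' (PrimeSpectrum.ext h))
  let P : PrimeSpectrum A := ⟨Ideal.span {π}, (Ideal.span_singleton_prime hπ.ne_zero).2 hπ⟩
  have hPp : P ≤ p := (Ideal.span_singleton_le_iff_mem _).2 hπp
  have hP : ⊥ < P := bot_lt_iff_ne_bot.2 fun h => hπ.ne_zero
    (Ideal.span_singleton_eq_bot.1 (congrArg asIdeal h))
  exact ⟨π, congrArg asIdeal ((hp.eq_or_eq hP.le hPp).resolve_left hP.ne').symm⟩

lemma covBy_of_bot_covBy_of_covBy [IsDomain A] [IsNoetherianRing A]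
    [UniqueFactorizationMonoid A] {p p' q : PrimeSpectrum A} (hp : ⊥ ⋖ p) (hpq : p ⋖ q)
    (hp' : ⊥ < p') (hp'q : p' < q) : p' ⋖ q := by
  by_cases hp'p : p' ≤ p
  · rwa [(hp.eq_or_eq hp'.le hp'p).resolve_left hp'.ne']
  obtain ⟨π, hπ⟩ := exists_asIdeal_eq_span_singleton_of_bot_covBy hp
  exact covBy_of_mem_minimalPrimes_sup_span_singleton
    (hπ ▸ mem_minimalPrimes_sup_of_covBy hpq hp'q.le hp'p) hp'q

end PrimeSpectrum

section Chains

variable {A : Type} [CommRing A]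

lemma IsSaturatedChain.strictMono {n : ℕ} {f : Fin (n + 1) → PrimeSpectrum A}
    (hf : IsSaturatedChain f) : StrictMono f :=
  Fin.strictMono_iff_lt_succ.2 fun i => (hf i).lt

lemma IsSaturatedChain.length_le_ringKrullDim {n : ℕ} {f : Fin (n + 1) → PrimeSpectrum A}
    (hf : IsSaturatedChain f) : (n : WithBot ℕ∞) ≤ ringKrullDim A :=
  Order.LTSeries.length_le_krullDim (LTSeries.mk n f hf.strictMono)

lemma IsSaturatedChain.head_eq_bot_of_ringKrullDim_le [IsDomain A] {n : ℕ}
    {f : Fin (n + 1) → PrimeSpectrum A} (hf : IsSaturatedChain f) (hdim : ringKrullDim A ≤ n) :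
    f 0 = ⊥ := by
  by_contra h
  let s := (LTSeries.mk n f hf.strictMono).cons ⊥ (bot_lt_iff_ne_bot.2 h)
  have hs : s.length = n + 1 := RelSeries.cons_length _ _ _
  have := (Order.LTSeries.length_le_krullDim s).trans hdim
  rw [hs] at this
  norm_cast at this
  omega

lemma IsSaturatedChain.le_length_of_ringKrullDim_le_three [IsDomain A] [IsNoetherianRing A]
    [UniqueFactorizationMonoid A] (hdim : ringKrullDim A ≤ 3) {n m : ℕ}
    {f : Fin (n + 1) → PrimeSpectrum A} {g : Fin (m + 1) → PrimeSpectrum A}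
    (hf : IsSaturatedChain f) (hg : IsSaturatedChain g) (h0 : f 0 = g 0)
    (hlast : f (Fin.last n) = g (Fin.last m)) : m ≤ n := by
  by_contra! hnm
  have hm : m ≤ 3 := by exact_mod_cast hg.length_le_ringKrullDim.trans hdim
  have hn0 : n ≠ 0 := by
    rintro rfl
    exact (hg.strictMono (by simp [Fin.lt_def]; omega)).ne
      (h0.symm.trans hlast)
  have hn1 : n ≠ 1 := by
    rintro rfl
    refine (hf 0).2 (c := g ⟨1, by omega⟩) ?_ ?_
    · exact h0 ▸ hg.strictMono (by simp [Fin.lt_def])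
    · exact (show f 1 = _ from hlast) ▸ hg.strictMono (by simp [Fin.lt_def]; omega)
  obtain rfl : n = 2 := by omega
  obtain rfl : m = 3 := by omega
  have hbot : g 0 = ⊥ := hg.head_eq_bot_of_ringKrullDim_le hdim
  have hf0 : ⊥ ⋖ f 1 := hbot ▸ h0 ▸ hf 0
  have hf1 : f 1 ⋖ g 3 := hlast ▸ hf 1
  have hg0 : ⊥ < g 1 := hbot ▸ (hg 0).lt
  have hg13 : g 1 < g 3 := hg.strictMono (by decide)
  exact (PrimeSpectrum.covBy_of_bot_covBy_of_covBy hf0 hf1 hg0 hg13).2 (hg 1).lt (hg 2).lt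

end Chains

theorem stmt14_general (A : Type) [CommRing A] [IsDomain A] [IsNoetherianRing A]
    [UniqueFactorizationMonoid A] (hdim : ringKrullDim A ≤ 3) :
    IsCatenary A := fun _ _ _ _ hf hg h0 hlast =>
  le_antisymm (hg.le_length_of_ringKrullDim_le_three hdim hf h0.symm hlast.symm)
    (hf.le_length_of_ringKrullDim_le_three hdim hg h0 hlast)

/-- Every Noetherian local unique factorization domain of dimension at most `3` is
catenary. -/
theorem stmt14 (A : Type) [CommRing A] [IsDomain A] [IsLocalRing A] [IsNoetherianRing A]
    [UniqueFactorizationMonoid A] (hdim : ringKrullDim A ≤ 3) :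
    IsCatenary A :=
  stmt14_general A hdim
end

section
/- Let A be a noncatenary Noetherian local UFD and let m < dim A be the length of some saturated chain of primes from (0) to the maximal ideal. Then m > 2, and hence dim A > 3. -/
open IsLocalRing

/-!
In a local ring `dim A` is the height of the maximal ideal `𝔪`, and Krull's height theorem bounds
that height by the number of generators of any ideal over which `𝔪` is minimal. If `q` covers a
prime `p = (s)`, then `q` is minimal over `(s, y)` for any `y ∈ q \ p`, so `ht q ≤ #s + 1`. In a
UFD a prime covering `(0)` contains a prime element `x`, and then it equals `(x)`. Hence a
saturated chain `(0) ⋖ p₁ ⋖ ⋯ ⋖ 𝔪` of length `m ≤ 2` would force `dim A = ht 𝔪 ≤ m`,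
contradicting `m < dim A`.
-/

theorem Ideal.height_le_card_add_one_of_covBy {R : Type*} [CommRing R] [IsNoetherianRing R]
    {p q : PrimeSpectrum R} (hpq : p ⋖ q) {s : Finset R} (hs : p.asIdeal = Ideal.span s) :
    q.asIdeal.height ≤ s.card + 1 := by
  classical
  obtain ⟨y, hyq, hyp⟩ :=
    SetLike.exists_of_lt ((PrimeSpectrum.asIdeal_lt_asIdeal p q).mpr hpq.lt)
  have hspan_le (J : Ideal R) : Ideal.span ↑(insert y s) ≤ J ↔ y ∈ J ∧ p.asIdeal ≤ J := by
    rw [hs, Finset.coe_insert, Ideal.span_le, Ideal.span_le, Set.insert_subset_iff,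
      SetLike.mem_coe]
  have hmin : q.asIdeal ∈ (Ideal.span ↑(insert y s)).minimalPrimes := by
    refine ⟨⟨q.isPrime, (hspan_le _).2 ⟨hyq, hpq.le⟩⟩, fun J ⟨hJ, hsJ⟩ hJq => ?_⟩
    obtain ⟨hyJ, hpJ⟩ := (hspan_le J).1 hsJ
    have hJ_ne : (⟨J, hJ⟩ : PrimeSpectrum R) ≠ p := by rintro rfl; exact hyp hyJ
    exact (congrArg PrimeSpectrum.asIdeal
      ((hpq.eq_or_eq (c := ⟨J, hJ⟩) hpJ hJq).resolve_left hJ_ne)).ge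
  calc q.asIdeal.height ≤ (insert y s).card :=
        Ideal.height_le_card_of_mem_minimalPrimes_span_finset hmin
    _ ≤ s.card + 1 := by exact_mod_cast Finset.card_insert_le y s

theorem PrimeSpectrum.exists_asIdeal_eq_span_singleton_of_bot_covBy_s16 {R : Type*} [CommRing R]
    [IsDomain R] [UniqueFactorizationMonoid R] {p : PrimeSpectrum R} (hp : ⊥ ⋖ p) :
    ∃ x, p.asIdeal = Ideal.span {x} := by
  have hne : p.asIdeal ≠ ⊥ := fun h => hp.lt.ne' (PrimeSpectrum.ext h)
  obtain ⟨x, hxp, hx⟩ := p.isPrime.exists_mem_prime_of_ne_bot hne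
  let px : PrimeSpectrum R := ⟨Ideal.span {x}, (Ideal.span_singleton_prime hx.ne_zero).mpr hx⟩
  have hpx_ne : px ≠ ⊥ := fun h => hx.ne_zero <| by
    simpa [px] using congrArg PrimeSpectrum.asIdeal h
  have hle : px ≤ p := (Ideal.span_singleton_le_iff_mem _).mpr hxp
  exact ⟨x, congrArg PrimeSpectrum.asIdeal ((hp.eq_or_eq bot_le hle).resolve_left hpx_ne).symm⟩

theorem IsSaturatedChain.height_last_le_of_le_two {R : Type} [CommRing R] [IsDomain R]
    [IsNoetherianRing R] [UniqueFactorizationMonoid R]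
    {m : ℕ} {f : Fin (m + 1) → PrimeSpectrum R}
    (hsat : IsSaturatedChain f) (h0 : f 0 = ⊥) (hm : m ≤ 2) :
    (f (Fin.last m)).asIdeal.height ≤ m := by
  interval_cases m
  · simp [show Fin.last 0 = 0 from rfl, h0, PrimeSpectrum.asIdeal_bot]
  · simpa using Ideal.height_le_card_add_one_of_covBy (hsat 0) (s := ∅) (by simp [h0])
  · obtain ⟨x, hx⟩ :=
      PrimeSpectrum.exists_asIdeal_eq_span_singleton_of_bot_covBy_s16 (h0 ▸ hsat 0)
    simpa [one_add_one_eq_two] using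
      Ideal.height_le_card_add_one_of_covBy (hsat 1) (s := {x}) (by simpa using hx)

theorem stmt16_general (A : Type) [CommRing A] [IsDomain A] [IsLocalRing A] [IsNoetherianRing A]
    [UniqueFactorizationMonoid A]
    (m : ℕ) (f : Fin (m + 1) → PrimeSpectrum A)
    (hsat : IsSaturatedChain f) (h0 : f 0 = ⟨⊥, Ideal.bot_prime⟩)
    (hlast : (f (Fin.last m)).asIdeal = maximalIdeal A)
    (hm : (m : WithBot ℕ∞) < ringKrullDim A) :
    2 < m ∧ 3 < ringKrullDim A := by
  have h2m : 2 < m := by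
    by_contra! hm2
    have hdim : ringKrullDim A ≤ m := by
      rw [← maximalIdeal_height_eq_ringKrullDim, ← hlast]
      exact_mod_cast hsat.height_last_le_of_le_two h0 hm2
    exact hm.not_ge hdim
  refine ⟨h2m, lt_of_le_of_lt ?_ hm⟩
  exact_mod_cast (show 3 ≤ m by omega)

/-- Let `A` be a noncatenary Noetherian local UFD and `m < dim A` the length of some
saturated chain of primes from `(0)` to the maximal ideal.  Then `m > 2` and
`dim A > 3`. -/
theorem stmt16 (A : Type) [CommRing A] [IsDomain A] [IsLocalRing A] [IsNoetherianRing A]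
    [UniqueFactorizationMonoid A] (hnoncat : ¬ IsCatenary A)
    (m : ℕ) (f : Fin (m + 1) → PrimeSpectrum A)
    (hsat : IsSaturatedChain f) (h0 : f 0 = ⟨⊥, Ideal.bot_prime⟩)
    (hlast : (f (Fin.last m)).asIdeal = maximalIdeal A)
    (hm : (m : WithBot ℕ∞) < ringKrullDim A) :
    2 < m ∧ 3 < ringKrullDim A :=
  stmt16_general A m f hsat h0 hlast hm
end
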